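/- Let k ≥ 2, Λ_k = [[0, 1], [ζ_{2^{k-1}}, 0]], |λ_k⟩ = (1/√2)·(1, ζ_{2^k})ᵀ, and let U = A + B·ζ_{2^k} be a d×d unitary with A, B matrices over Z[1/2, ζ_{2^{k-1}}]. Define φ_k(U) = A ⊗ I₂ + B ⊗ Λ_k. Then for every vector |u⟩ ∈ C^d, φ_k(U)(|u⟩ ⊗ |λ_k⟩) = (U|u⟩) ⊗ |λ_k⟩. -/

import Mathlib

open Matrix Kronecker

noncomputable def zeta (k : ℕ) : ℂ := Complex.exp (2 * Real.pi * Complex.I / 2 ^ k)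

noncomputable def Dz (k : ℕ) : Subring ℂ := Subring.closure {1 / 2, zeta k}

noncomputable def Lam (k : ℕ) : Matrix (Fin 2) (Fin 2) ℂ := !![0, 1; zeta (k - 1), 0]

noncomputable def lamVec (k : ℕ) : Fin 2 → ℂ := ![1 / Real.sqrt 2, zeta k / Real.sqrt 2]

/-- Kronecker product of vectors. -/
def vk {α β : Type*} (x : α → ℂ) (y : β → ℂ) : α × β → ℂ := fun p => x p.1 * y p.2

lemma zeta_sq (k : ℕ) (hk : 1 ≤ k) : zeta (k - 1) = zeta k * zeta k := by
  unfold zeta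
  rw [← Complex.exp_add]
  congr 1
  have h : (2 : ℂ) ^ k = 2 ^ (k - 1) * 2 := by
    rw [← pow_succ]
    congr 1
    omega
  field_simp [h]
  linear_combination h

theorem stmt_9 (k : ℕ) (hk : 2 ≤ k) (d : ℕ) (A B : Matrix (Fin d) (Fin d) ℂ)
    (hA : ∀ i j, A i j ∈ Dz (k - 1)) (hB : ∀ i j, B i j ∈ Dz (k - 1))
    (hU : (A + zeta k • B) ∈ Matrix.unitaryGroup (Fin d) ℂ) (u : Fin d → ℂ) :
    (A ⊗ₖ (1 : Matrix (Fin 2) (Fin 2) ℂ) + B ⊗ₖ Lam k).mulVec (vk u (lamVec k)) =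
      vk ((A + zeta k • B).mulVec u) (lamVec k) := by
  have hz := zeta_sq k (by omega)
  funext p
  obtain ⟨i, t⟩ := p
  simp only [mulVec, dotProduct, vk, Fintype.sum_prod_type, Matrix.add_apply,
    kroneckerMap_apply, Lam, lamVec, Matrix.smul_apply, smul_eq_mul, Fin.sum_univ_two]
  fin_cases t <;>
    simp [Matrix.one_apply, hz, ← Finset.sum_add_distrib] <;>
    rw [Finset.sum_mul] <;>
    exact Finset.sum_congr rfl fun j _ => by ring
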